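/- The graph G constructed in the Exact 3-Cover reduction is chordal: every cycle of length at least 4 in G has a chord. -/

import Mathlib

/-!
Rank the vertices so that u and the l_i come first, then z_i, then Q_i, then y_i and v, then P,
then A, then B. The neighbours of any vertex with rank at least its own form a clique (a perfect
elimination ordering). On a cycle of length at least 4, the two cycle-neighbours of a vertex of
least rank are then adjacent, and the edge between them is a chord.
-/

def closedNbr {V : Type*} (G : SimpleGraph V) (v : V) : Set V :=
  insert v (G.neighborSet v)

def kVEDom {V : Type*} (G : SimpleGraph V) (k : ℕ) (D : Set V) : Prop :=
  ∀ u v : V, G.Adj u v → k ≤ ((closedNbr G u ∪ closedNbr G v) ∩ D).ncard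

/-- Vertex set of the chordal graph built from an Exact 3-Cover instance:
`A = Fin (3q)` (vertices `a_i`), `B = Fin m` (vertices `b_j`), `P = Fin (k-2)`,
`Fin 2` (with `0 = u`, `1 = v`), `Y = Fin (3q)` (vertices `y_i`),
`Fin (3q) × Fin (k-1)` (the cliques `Q_i`) and `Fin (3q) × Fin 2`
(with `(i,0) = z_i`, `(i,1) = l_i`). -/
abbrev X3CVert (q m k : ℕ) :=
  Fin (3 * q) ⊕ (Fin m ⊕ (Fin (k - 2) ⊕ (Fin 2 ⊕ (Fin (3 * q) ⊕
    ((Fin (3 * q) × Fin (k - 1)) ⊕ (Fin (3 * q) × Fin 2))))))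

/-- The graph `G` constructed from the Exact 3-Cover instance `(X, C)`, where
`Cc j` is the 3-element subset of `X = Fin (3q)` corresponding to `c_j`:
`B`, `P`, `B ∪ P`, and each `Q_i` are cliques; `a_i b_j` is an edge iff
`x_i ∈ c_j`; `v` is adjacent to all of `P` and to `u`; `y_i` is adjacent to
`a_i` and to all of `Q_i`; `z_i` is adjacent to all of `Q_i` and to `l_i`. -/
def x3cGraph (q m k : ℕ) (Cc : Fin m → Finset (Fin (3 * q))) :
    SimpleGraph (X3CVert q m k) :=
  SimpleGraph.fromRel (fun a b =>
    match a, b with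
    | .inl i, .inr (.inl j) => i ∈ Cc j
    | .inr (.inl _), .inr (.inl _) => True
    | .inr (.inl _), .inr (.inr (.inl _)) => True
    | .inr (.inr (.inl _)), .inr (.inr (.inl _)) => True
    | .inr (.inr (.inl _)), .inr (.inr (.inr (.inl x))) => x = 1
    | .inr (.inr (.inr (.inl _))), .inr (.inr (.inr (.inl _))) => True
    | .inl i, .inr (.inr (.inr (.inr (.inl i')))) => i = i'
    | .inr (.inr (.inr (.inr (.inl i)))),
        .inr (.inr (.inr (.inr (.inr (.inl (i', _)))))) => i = i'
    | .inr (.inr (.inr (.inr (.inr (.inl (i, _)))))),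
        .inr (.inr (.inr (.inr (.inr (.inl (i', _)))))) => i = i'
    | .inr (.inr (.inr (.inr (.inr (.inl (i, _)))))),
        .inr (.inr (.inr (.inr (.inr (.inr (i', x)))))) => i = i' ∧ x = 0
    | .inr (.inr (.inr (.inr (.inr (.inr (i, _)))))),
        .inr (.inr (.inr (.inr (.inr (.inr (i', _)))))) => i = i'
    | _, _ => False)
/-- A graph is chordal if every cycle of length at least 4 has a chord, i.e.
an edge of the graph between two vertices of the cycle that is not an edge of
the cycle. -/
def IsChordal {V : Type*} (G : SimpleGraph V) : Prop :=
  ∀ (x : V) (c : G.Walk x x), c.IsCycle → 4 ≤ c.length →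
    ∃ a b : V, G.Adj a b ∧ a ∈ c.support ∧ b ∈ c.support ∧ s(a, b) ∉ c.edges

namespace SimpleGraph.Walk

variable {V : Type*} {G : SimpleGraph V} {u : V}

lemma IsCycle.snd_penultimate_notMem_edges {c : G.Walk u u} (hc : c.IsCycle)
    (hl : 4 ≤ c.length) : s(c.snd, c.penultimate) ∉ c.edges := by
  have hnil := hc.not_nil
  have hedges : c.edges = s(u, c.snd) :: c.tail.edges := by
    conv_lhs => rw [← c.cons_tail_eq hnil]
    rfl
  rw [hedges, List.mem_cons, Sym2.eq_iff]
  rintro ((⟨hsnd, -⟩ | ⟨-, hpen⟩) | h)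
  · exact (c.adj_snd hnil).ne hsnd.symm
  · exact (c.adj_penultimate hnil).ne hpen
  · have h2 : c.penultimate = c.getVert 2 := by
      simpa using hc.isPath_tail.eq_snd_of_mem_edges h
    have := hc.getVert_injOn (by simp; omega) (by simp; omega) h2
    omega

end SimpleGraph.Walk

open SimpleGraph Walk in
theorem isChordal_of_isClique_upperNeighbors {V α : Type*} [LinearOrder α] {G : SimpleGraph V}
    (r : V → α) (hr : ∀ w, G.IsClique {p | G.Adj w p ∧ r w ≤ r p}) : IsChordal G := by
  classical
  intro x c hc hl
  obtain ⟨w, hw, hmin⟩ := c.support.toFinset.exists_min_image r ⟨x, by simp⟩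
  rw [List.mem_toFinset] at hw
  simp only [List.mem_toFinset] at hmin
  set c' := c.rotate w hw
  have hc' : c'.IsCycle := hc.rotate hw
  have hnil := hc'.not_nil
  have hmem : ∀ i, c'.getVert i ∈ c.support := fun i =>
    (mem_support_rotate_iff c w hw).mp (c'.getVert_mem_support i)
  refine ⟨c'.snd, c'.penultimate, ?_, hmem _, hmem _, fun h => ?_⟩
  · exact hr w ⟨c'.adj_snd hnil, hmin _ (hmem _)⟩
      ⟨(c'.adj_penultimate hnil).symm, hmin _ (hmem _)⟩ hc'.snd_ne_penultimate
  · exact hc'.snd_penultimate_notMem_edges (by simpa [c'] using hl)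
      ((c.rotate_edges w hw).perm.mem_iff.mpr h)

-- `u ↦ 0`, `v ↦ 3` and `z_i ↦ 1`, `l_i ↦ 0`
def x3cRank {q m k : ℕ} : X3CVert q m k → ℕ
  | .inl _ => 5
  | .inr (.inl _) => 6
  | .inr (.inr (.inl _)) => 4
  | .inr (.inr (.inr (.inl t))) => 3 * t.val
  | .inr (.inr (.inr (.inr (.inl _)))) => 3
  | .inr (.inr (.inr (.inr (.inr (.inl _))))) => 2
  | .inr (.inr (.inr (.inr (.inr (.inr (_, t)))))) => 1 - t.val

theorem x3cGraph_isClique_upperNeighbors (q m k : ℕ) (Cc : Fin m → Finset (Fin (3 * q)))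
    (w : X3CVert q m k) :
    (x3cGraph q m k Cc).IsClique {p | (x3cGraph q m k Cc).Adj w p ∧ x3cRank w ≤ x3cRank p} := by
  rintro p ⟨hwp, hrp⟩ n ⟨hwn, hrn⟩ hpn
  rcases w with _ | _ | _ | w | _ | _ | ⟨_, w⟩ <;>
  rcases p with _ | _ | _ | p | _ | _ | ⟨_, p⟩ <;>
  simp [x3cGraph, x3cRank] at hwp hrp <;>
  rcases n with _ | _ | _ | n | _ | _ | ⟨_, n⟩ <;>
  simp [x3cGraph, x3cRank] at hwn hrn hpn ⊢ <;> grind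

theorem x3cGraph_isChordal_general (q m k : ℕ)
    (Cc : Fin m → Finset (Fin (3 * q))) :
    IsChordal (x3cGraph q m k Cc) :=
  isChordal_of_isClique_upperNeighbors x3cRank (x3cGraph_isClique_upperNeighbors q m k Cc)

/-- The graph constructed in the Exact 3-Cover reduction is chordal. -/
theorem x3cGraph_isChordal (q m k : ℕ) (hk : 2 ≤ k)
    (Cc : Fin m → Finset (Fin (3 * q))) (h3 : ∀ j, (Cc j).card = 3) :
    IsChordal (x3cGraph q m k Cc) :=
  x3cGraph_isChordal_general q m k Cc
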